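/- arXiv:1811.08447 — 5 statements merged into one kernel-verified Lean document; each statement's English description precedes it below -/
import Mathlib

section
/- Let A be a finite-dimensional split commutative semisimple Frobenius algebra over a field K of characteristic zero with Frobenius functional λ, dual bases {b_i}, {b_i*}, and for a character φ set α_φ = Σ_i φ(b_i*) b_i and f_φ = φ(α_φ). If f_φ ≠ 0, then α_φ / f_φ is an idempotent of A, and it is the minimal idempotent corresponding to φ, i.e. φ(α_φ/f_φ) = 1 and φ'(α_φ/f_φ) = 0 for all characters φ' ≠ φ. -/
/-!
The dual bases show that `α_φ = ∑ i, φ (b_i*) • b_i` represents `φ` under the Frobenius form: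
`λ (α_φ * x) = φ x`. Nondegeneracy and multiplicativity of `φ` then give `a * α_φ = φ a • α_φ`
for every `a`. Taking `a = α_φ` gives `α_φ² = f_φ • α_φ`, and applying a character `φ' ≠ φ`
to `a * α_φ = φ a • α_φ` at an `a` separating them forces `φ' α_φ = 0`.
-/

open Module

section DualBases

variable {K A ι : Type*} [Field K] [Ring A] [Algebra K A] [Fintype ι] [DecidableEq ι]
  {lam : A →ₗ[K] K} {b bd : ι → A}

theorem linearIndependent_of_lam_mul_eq_ite
    (hdual : ∀ i j, lam (b i * bd j) = if i = j then 1 else 0) : LinearIndependent K bd := by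
  rw [Fintype.linearIndependent_iff]
  intro g hg j
  have hcoeff : lam (b j * ∑ i, g i • bd i) = g j := by
    simp [Finset.mul_sum, hdual]
  simpa [hg] using hcoeff.symm

theorem span_range_eq_top_of_lam_mul_eq_ite [FiniteDimensional K A]
    (hcard : Fintype.card ι = finrank K A)
    (hdual : ∀ i j, lam (b i * bd j) = if i = j then 1 else 0) :
    Submodule.span K (Set.range bd) = ⊤ :=
  (linearIndependent_of_lam_mul_eq_ite hdual).span_eq_top_of_card_eq_finrank' hcard

theorem lam_sum_smul_mul_eq [FiniteDimensional K A] (ψ : A →ₗ[K] K)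
    (hcard : Fintype.card ι = finrank K A)
    (hdual : ∀ i j, lam (b i * bd j) = if i = j then 1 else 0) (x : A) :
    lam ((∑ i, ψ (bd i) • b i) * x) = ψ x := by
  have hext : lam ∘ₗ LinearMap.mulLeft K (∑ i, ψ (bd i) • b i) = ψ := by
    refine LinearMap.ext_on_range (span_range_eq_top_of_lam_mul_eq_ite hcard hdual) fun j => ?_
    simp [Finset.sum_mul, hdual]
  exact LinearMap.congr_fun hext x

end DualBases

section Characters

variable {K A : Type*} [Field K]

theorem IsIdempotentElem.inv_smul_of_mul_self_eq_smul [Ring A] [Algebra K A] {α : A} {f : K}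
    (h : α * α = f • α) : IsIdempotentElem (f⁻¹ • α) := by
  rcases eq_or_ne f 0 with rfl | hf
  · simp [IsIdempotentElem]
  · rw [IsIdempotentElem, smul_mul_smul_comm, h, smul_smul, inv_mul_cancel_right₀ hf]

theorem AlgHom.mul_eq_smul_of_lam_mul_eq [CommRing A] [Algebra K A] {lam : A →ₗ[K] K}
    (hnd : ∀ a : A, (∀ c : A, lam (a * c) = 0) → a = 0) {φ : A →ₐ[K] K} {α : A}
    (hα : ∀ x, lam (α * x) = φ x) (a : A) : a * α = φ a • α := by
  refine sub_eq_zero.mp (hnd _ fun c => ?_)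
  have hexpand : (a * α - φ a • α) * c = α * (a * c) - φ a • (α * c) := by
    rw [sub_mul, smul_mul_assoc]
    ring
  rw [hexpand, map_sub, map_smul, hα, hα, map_mul, smul_eq_mul, sub_self]

theorem AlgHom.apply_eq_zero_of_mul_eq_smul [Ring A] [Algebra K A] {φ φ' : A →ₐ[K] K} {α : A}
    (hα : ∀ a, a * α = φ a • α) (hne : φ' ≠ φ) : φ' α = 0 := by
  obtain ⟨a, ha⟩ := DFunLike.ne_iff.mp hne
  by_contra hα'
  have h := congrArg φ' (hα a)
  rw [map_mul, map_smul, smul_eq_mul] at h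
  exact ha (mul_right_cancel₀ hα' h)

end Characters

theorem stmt1_general {K : Type*} [Field K]
    {A : Type*} [CommRing A] [Algebra K A] [FiniteDimensional K A]
    {ι : Type*} [Fintype ι] [DecidableEq ι]
    (lam : A →ₗ[K] K)
    (hnd : ∀ a : A, (∀ c : A, lam (a * c) = 0) → a = 0)
    (b bd : ι → A)
    (hb : Module.Basis ι K A)
    (hdual : ∀ i j, lam (b i * bd j) = if i = j then 1 else 0)
    (φ : A →ₐ[K] K)
    (hf : φ (∑ i, φ (bd i) • b i) ≠ 0) :
    ((φ (∑ i, φ (bd i) • b i))⁻¹ • ∑ i, φ (bd i) • b i) *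
        ((φ (∑ i, φ (bd i) • b i))⁻¹ • ∑ i, φ (bd i) • b i) =
      (φ (∑ i, φ (bd i) • b i))⁻¹ • ∑ i, φ (bd i) • b i ∧
    φ ((φ (∑ i, φ (bd i) • b i))⁻¹ • ∑ i, φ (bd i) • b i) = 1 ∧
    ∀ φ' : A →ₐ[K] K, φ' ≠ φ →
      φ' ((φ (∑ i, φ (bd i) • b i))⁻¹ • ∑ i, φ (bd i) • b i) = 0 := by
  set α := ∑ i, φ (bd i) • b i
  have hrep : ∀ x, lam (α * x) = φ x :=
    lam_sum_smul_mul_eq φ.toLinearMap (finrank_eq_card_basis hb).symm hdual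
  have heigen : ∀ a, a * α = φ a • α := φ.mul_eq_smul_of_lam_mul_eq hnd hrep
  refine ⟨IsIdempotentElem.inv_smul_of_mul_self_eq_smul (heigen α), ?_, fun φ' hne => ?_⟩
  · rw [map_smul, smul_eq_mul, inv_mul_cancel₀ hf]
  · rw [map_smul, AlgHom.apply_eq_zero_of_mul_eq_smul heigen hne, smul_zero]

/-- With `α_φ = ∑ i, φ(bd i) • b i` and `f_φ = φ(α_φ) ≠ 0`, the
element `α_φ / f_φ` is the minimal idempotent corresponding to the character
`φ`: it is idempotent, `φ` takes the value `1` on it, and every other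
character vanishes on it. -/
theorem stmt1 {K : Type*} [Field K] [CharZero K]
    {A : Type*} [CommRing A] [Algebra K A] [FiniteDimensional K A]
    {ι : Type*} [Fintype ι] [DecidableEq ι]
    (split : A ≃ₐ[K] (ι → K))
    (lam : A →ₗ[K] K)
    (hnd : ∀ a : A, (∀ c : A, lam (a * c) = 0) → a = 0)
    (b bd : ι → A)
    (hb : Module.Basis ι K A) (hbe : ∀ i, hb i = b i)
    (hdual : ∀ i j, lam (b i * bd j) = if i = j then 1 else 0)
    (φ : A →ₐ[K] K)
    (hf : φ (∑ i, φ (bd i) • b i) ≠ 0) :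
    ((φ (∑ i, φ (bd i) • b i))⁻¹ • ∑ i, φ (bd i) • b i) *
        ((φ (∑ i, φ (bd i) • b i))⁻¹ • ∑ i, φ (bd i) • b i) =
      (φ (∑ i, φ (bd i) • b i))⁻¹ • ∑ i, φ (bd i) • b i ∧
    φ ((φ (∑ i, φ (bd i) • b i))⁻¹ • ∑ i, φ (bd i) • b i) = 1 ∧
    ∀ φ' : A →ₐ[K] K, φ' ≠ φ →
      φ' ((φ (∑ i, φ (bd i) • b i))⁻¹ • ∑ i, φ (bd i) • b i) = 0 :=
  stmt1_general lam hnd b bd hb hdual φ hf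
end

section
/- Let A be a finite-dimensional split commutative semisimple algebra over ℂ with a distinguished basis {b_i} and a Frobenius functional λ such that {b_i} is orthonormal for the Hermitian form ⟨a,c⟩ = λ(a c*), where (·)* is a conjugate-linear algebra anti-involution permuting the basis {b_i}. For characters φ, φ' of A, with α_φ = Σ_i φ(b_i) b_i*, one has the orthogonality relation ⟨α_φ, α_{φ'}⟩ = δ_{φφ'} · f_φ, where f_φ = φ(α_φ). -/
/-!
By orthonormality, `α_φ = ∑ i, φ(b i) • (b i)*` represents `φ` under the Frobenius pairing:
`λ(x α_φ) = φ(x)`. Multiplicativity of `φ` and nondegeneracy then make `α_φ` an eigenvector,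
`a α_φ = φ(a) α_φ`, and applying `φ` to this for `α_{φ'}` shows `φ(α_{φ'}) = 0` when `φ ≠ φ'`.
Finally `⟨α_φ, α_{φ'}⟩ = λ((α_{φ'})* α_φ) = φ((α_{φ'})*) = conj φ(α_{φ'})`,
and `φ(α_φ) = ∑ i, |φ(b i)|²` is real.
-/

section CharElem

variable {R A ι : Type*} [CommRing R] [CommRing A] [Algebra R A] [Fintype ι]

noncomputable def charElem (st : A → A) (b : Module.Basis ι R A) (φ : A →ₐ[R] R) : A :=
  ∑ i, φ (b i) • st (b i)

variable {st : A → A} {b : Module.Basis ι R A}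

theorem starRingEnd_apply_charElem [StarRing R] {φ : A →ₐ[R] R}
    (hφ : ∀ a, φ (st a) = starRingEnd R (φ a)) :
    starRingEnd R (φ (charElem st b φ)) = φ (charElem st b φ) := by
  simp only [charElem, map_sum, map_smul, hφ, smul_eq_mul, map_mul, starRingEnd_self_apply,
    mul_comm]

variable [DecidableEq ι] {lam : A →ₗ[R] R}

theorem lam_mul_st_basis (horth : ∀ i j, lam (b i * st (b j)) = if i = j then 1 else 0)
    (x : A) (j : ι) : lam (x * st (b j)) = b.repr x j := by
  conv_lhs => rw [← b.sum_repr x]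
  simp only [Finset.sum_mul, map_sum, smul_mul_assoc, map_smul, horth, smul_eq_mul,
    mul_ite, mul_one, mul_zero, Finset.sum_ite_eq', Finset.mem_univ, if_true]

theorem lam_mul_charElem (horth : ∀ i j, lam (b i * st (b j)) = if i = j then 1 else 0)
    (φ : A →ₐ[R] R) (x : A) : lam (x * charElem st b φ) = φ x := by
  conv_rhs => rw [← b.sum_repr x]
  simp only [charElem, Finset.mul_sum, mul_smul_comm, map_sum, map_smul,
    lam_mul_st_basis horth, smul_eq_mul, mul_comm]

theorem mul_charElem (hnd : ∀ a : A, (∀ c : A, lam (a * c) = 0) → a = 0)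
    (horth : ∀ i j, lam (b i * st (b j)) = if i = j then 1 else 0)
    (φ : A →ₐ[R] R) (a : A) : a * charElem st b φ = φ a • charElem st b φ := by
  refine sub_eq_zero.mp (hnd _ fun c => ?_)
  rw [sub_mul, map_sub, smul_mul_assoc, map_smul, mul_right_comm, mul_comm (charElem st b φ) c,
    lam_mul_charElem horth, lam_mul_charElem horth, map_mul, smul_eq_mul, sub_self]

theorem apply_charElem_eq_zero_of_ne [IsDomain R]
    (hnd : ∀ a : A, (∀ c : A, lam (a * c) = 0) → a = 0)
    (horth : ∀ i j, lam (b i * st (b j)) = if i = j then 1 else 0)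
    {φ ψ : A →ₐ[R] R} (hne : φ ≠ ψ) : φ (charElem st b ψ) = 0 := by
  obtain ⟨a, ha⟩ : ∃ a, φ a ≠ ψ a := by
    by_contra! h
    exact hne (AlgHom.ext h)
  have heigen : φ a * φ (charElem st b ψ) = ψ a * φ (charElem st b ψ) := by
    rw [← map_mul, mul_charElem hnd horth, map_smul, smul_eq_mul]
  exact (mul_eq_mul_right_iff.mp heigen).resolve_left ha

theorem lam_charElem_mul_st_charElem [StarRing R] {φ : A →ₐ[R] R}
    (horth : ∀ i j, lam (b i * st (b j)) = if i = j then 1 else 0)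
    (hφ : ∀ a, φ (st a) = starRingEnd R (φ a)) (ψ : A →ₐ[R] R) :
    lam (charElem st b φ * st (charElem st b ψ)) = starRingEnd R (φ (charElem st b ψ)) := by
  rw [mul_comm, lam_mul_charElem horth, hφ]

end CharElem

theorem stmt2_general {A : Type*} [CommRing A] [Algebra ℂ A]
    {ι : Type*} [Fintype ι] [DecidableEq ι] [DecidableEq (A →ₐ[ℂ] ℂ)]
    (lam : A →ₗ[ℂ] ℂ)
    (hnd : ∀ a : A, (∀ c : A, lam (a * c) = 0) → a = 0)
    (st : A → A)
    (b : ι → A) (hb : Module.Basis ι ℂ A) (hbe : ∀ i, hb i = b i)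
    (horthonormal : ∀ i j, lam (b i * st (b j)) = if i = j then 1 else 0)
    (hchar_st : ∀ (ψ : A →ₐ[ℂ] ℂ) (a : A), ψ (st a) = starRingEnd ℂ (ψ a))
    (φ φ' : A →ₐ[ℂ] ℂ) :
    lam ((∑ i, φ (b i) • st (b i)) * st (∑ i, φ' (b i) • st (b i))) =
      if φ = φ' then φ (∑ i, φ (b i) • st (b i)) else 0 := by
  obtain rfl : b = ⇑hb := funext fun i => (hbe i).symm
  change lam (charElem st hb φ * st (charElem st hb φ')) =
    if φ = φ' then φ (charElem st hb φ) else 0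
  rw [lam_charElem_mul_st_charElem horthonormal (hchar_st φ)]
  split_ifs with h
  · subst h
    exact starRingEnd_apply_charElem (hchar_st φ)
  · rw [apply_charElem_eq_zero_of_ne hnd horthonormal h, map_zero]

/-- Orthogonality of characters in a finite-dimensional split
commutative semisimple Frobenius ∗-algebra over ℂ with an orthonormal
distinguished basis: `⟨α_φ, α_{φ'}⟩ = δ_{φφ'} f_φ` where
`α_φ = ∑ i, φ(b i) • (b i)*` and `f_φ = φ(α_φ)`. -/
theorem stmt2 {A : Type*} [CommRing A] [Algebra ℂ A] [FiniteDimensional ℂ A]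
    {ι : Type*} [Fintype ι] [DecidableEq ι] [DecidableEq (A →ₐ[ℂ] ℂ)]
    (split : A ≃ₐ[ℂ] (ι → ℂ))
    (lam : A →ₗ[ℂ] ℂ)
    (hnd : ∀ a : A, (∀ c : A, lam (a * c) = 0) → a = 0)
    (st : A → A)
    (hst_add : ∀ a c : A, st (a + c) = st a + st c)
    (hst_smul : ∀ (z : ℂ) (a : A), st (z • a) = (starRingEnd ℂ z) • st a)
    (hst_mul : ∀ a c : A, st (a * c) = st c * st a)
    (hst_invol : ∀ a : A, st (st a) = a)
    (b : ι → A) (hb : Module.Basis ι ℂ A) (hbe : ∀ i, hb i = b i)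
    (σ : ι ≃ ι) (hstb : ∀ i, st (b i) = b (σ i))
    (horthonormal : ∀ i j, lam (b i * st (b j)) = if i = j then 1 else 0)
    (hposdef : ∀ a : A, a ≠ 0 → ∃ r : ℝ, 0 < r ∧ lam (a * st a) = (r : ℂ))
    (hchar_st : ∀ (ψ : A →ₐ[ℂ] ℂ) (a : A), ψ (st a) = starRingEnd ℂ (ψ a))
    (φ φ' : A →ₐ[ℂ] ℂ) :
    lam ((∑ i, φ (b i) • st (b i)) * st (∑ i, φ' (b i) • st (b i))) =
      if φ = φ' then φ (∑ i, φ (b i) • st (b i)) else 0 :=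
  stmt2_general lam hnd st b hb hbe horthonormal hchar_st φ φ'
end

section
/- Let A be a finite-dimensional split commutative semisimple Frobenius ∗-algebra over ℂ with orthonormal basis {b_i} (with respect to ⟨a,c⟩ = λ(ac*)) such that the structure constants of multiplication in this basis, defined by b_i · b_j = Σ_k N_{ij}^k b_k, are complex numbers. Then the Verlinde-type formula holds: N_{ij}^k = Σ_φ φ(b_i) φ(b_j) conj(φ(b_k)) / f_φ, where the sum is over all characters φ of A and f_φ = φ(Σ_i φ(b_i) b_i*) is the formal codegree of φ. -/
/-!
Through `split`, the characters of `A` are the coordinate functions `φ_t = split · t`, and `λ`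
becomes `a ↦ ∑ t, φ_t(a) w_t` with `w_t = λ(e_t)` for the primitive idempotents `e_t`. With
`M l t = φ_t(b l)`, orthonormality of `b` reads `M W Mᴴ = 1` for `W = diag w`; as `M` is square
this gives `W Mᴴ M = 1`, whose diagonal says `w_t = 1 / f_{φ_t}`. Hence
`∑_φ φ(b m) conj(φ(b k)) / f_φ = ⟨b m, b k⟩ = δ_{mk}`, and expanding
`φ(b i) φ(b j) = ∑_m N_{ij}^m φ(b m)` gives the formula.
-/

theorem Pi.evalAlgHom_injective {K ι : Type*} [CommSemiring K] [Nontrivial K] :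
    Function.Injective (Pi.evalAlgHom K (fun _ : ι => K)) := by
  classical
  intro s t h
  have := congrArg (fun ψ : (ι → K) →ₐ[K] K => ψ (Pi.single t 1)) h
  simpa [Pi.single_apply] using this

namespace AlgEquiv

variable {K A ι : Type*} [Field K] [CommRing A] [Algebra K A]

noncomputable def characterEquivOfPi [Finite ι] (e : A ≃ₐ[K] (ι → K)) : ι ≃ (A →ₐ[K] K) :=
  Equiv.ofBijective (fun t => (Pi.evalAlgHom K _ t).comp e.toAlgHom) <| by
    refine ⟨fun s t h => Pi.evalAlgHom_injective (K := K) ?_, fun φ => ?_⟩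
    · ext x
      simpa using congrArg (fun ψ : A →ₐ[K] K => ψ (e.symm x)) h
    · obtain ⟨t, ht⟩ := (φ.comp e.symm.toAlgHom).eq_piEvalAlgHom
      refine ⟨t, ?_⟩
      ext a
      simpa using (congrArg (fun ψ : (ι → K) →ₐ[K] K => ψ (e a)) ht).symm

@[simp]
theorem characterEquivOfPi_apply [Finite ι] (e : A ≃ₐ[K] (ι → K)) (t : ι) (a : A) :
    e.characterEquivOfPi t a = e a t := rfl

end AlgEquiv

theorem LinearMap.apply_eq_sum_linearEquiv_pi {R M N ι : Type*} [CommSemiring R]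
    [AddCommMonoid M] [Module R M] [AddCommMonoid N] [Module R N] [Fintype ι] [DecidableEq ι]
    (f : M →ₗ[R] N) (e : M ≃ₗ[R] (ι → R)) (a : M) :
    f a = ∑ t, e a t • f (e.symm (Pi.single t 1)) := by
  conv_lhs => rw [← e.symm_apply_apply a, pi_eq_sum_univ' (e a)]
  simp [map_sum, map_smul]

open Matrix in
theorem Matrix.diagonal_mul_conjTranspose_mul_eq_one {R n : Type*} [CommRing R] [StarRing R]
    [Fintype n] [DecidableEq n] {M : Matrix n n R} {w : n → R}
    (h : M * diagonal w * Mᴴ = 1) (t : n) : w t * ∑ l, star (M l t) * M l t = 1 := by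
  rw [Matrix.mul_assoc, mul_eq_one_comm, Matrix.mul_assoc] at h
  have htt := congrFun (congrFun h t) t
  rw [diagonal_mul, mul_apply, one_apply_eq] at htt
  simpa using htt

theorem codegree_eq_sum_mul_conj {A ι : Type*} [CommRing A] [Algebra ℂ A] [Fintype ι] {st : A → A}
    (hchar_st : ∀ (ψ : A →ₐ[ℂ] ℂ) (a : A), ψ (st a) = starRingEnd ℂ (ψ a))
    (b : ι → A) (φ : A →ₐ[ℂ] ℂ) :
    φ (∑ l, φ (b l) • st (b l)) = ∑ l, φ (b l) * starRingEnd ℂ (φ (b l)) := by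
  simp [map_sum, hchar_st]

open Matrix in
theorem sum_character_mul_conj_div_codegree {A ι : Type*} [CommRing A] [Algebra ℂ A]
    [Fintype ι] [DecidableEq ι] [Fintype (A →ₐ[ℂ] ℂ)] {st : A → A}
    (split : A ≃ₐ[ℂ] (ι → ℂ)) (lam : A →ₗ[ℂ] ℂ)
    (hchar_st : ∀ (ψ : A →ₐ[ℂ] ℂ) (a : A), ψ (st a) = starRingEnd ℂ (ψ a)) (b : ι → A)
    (horthonormal : ∀ i j, lam (b i * st (b j)) = if i = j then 1 else 0) (m k : ι) :
    ∑ φ : A →ₐ[ℂ] ℂ, φ (b m) * starRingEnd ℂ (φ (b k)) / φ (∑ l, φ (b l) • st (b l)) =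
      if m = k then 1 else 0 := by
  set M : Matrix ι ι ℂ := Matrix.of fun l t => split (b l) t
  set w : ι → ℂ := fun t => lam (split.symm (Pi.single t 1))
  have hlam (a : A) : lam a = ∑ t, split a t * w t :=
    lam.apply_eq_sum_linearEquiv_pi split.toLinearEquiv a
  have hst (a : A) (t : ι) : split (st a) t = starRingEnd ℂ (split a t) :=
    hchar_st (split.characterEquivOfPi t) a
  have hMwM : M * diagonal w * Mᴴ = 1 := by
    ext i j
    rw [mul_apply]
    simp only [mul_diagonal]
    simp only [M, one_apply, ← horthonormal, hlam, map_mul, Pi.mul_apply, hst]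
    refine Finset.sum_congr rfl fun _ _ => ?_
    simp only [of_apply, conjTranspose_apply, starRingEnd_apply]
    ring
  have hwf (t : ι) : (∑ l, split (b l) t * starRingEnd ℂ (split (b l) t))⁻¹ = w t := by
    refine (eq_inv_of_mul_eq_one_left ?_).symm
    simpa [M, mul_comm] using diagonal_mul_conjTranspose_mul_eq_one hMwM t
  rw [← split.characterEquivOfPi.sum_comp, ← horthonormal, hlam]
  refine Finset.sum_congr rfl fun t _ => ?_
  rw [codegree_eq_sum_mul_conj hchar_st]
  simp only [AlgEquiv.characterEquivOfPi_apply, div_eq_mul_inv, hwf, map_mul, Pi.mul_apply, hst]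

theorem stmt3_general {A : Type*} [CommRing A] [Algebra ℂ A]
    {ι : Type*} [Fintype ι] [DecidableEq ι] [Fintype (A →ₐ[ℂ] ℂ)]
    (split : A ≃ₐ[ℂ] (ι → ℂ))
    (lam : A →ₗ[ℂ] ℂ)
    (st : A → A)
    (b : ι → A)
    (horthonormal : ∀ i j, lam (b i * st (b j)) = if i = j then 1 else 0)
    (hchar_st : ∀ (ψ : A →ₐ[ℂ] ℂ) (a : A), ψ (st a) = starRingEnd ℂ (ψ a))
    (N : ι → ι → ι → ℂ)
    (hN : ∀ i j, b i * b j = ∑ k, N i j k • b k) :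
    ∀ i j k, N i j k =
      ∑ φ : A →ₐ[ℂ] ℂ, φ (b i) * φ (b j) * starRingEnd ℂ (φ (b k)) /
        φ (∑ l, φ (b l) • st (b l)) := by
  intro i j k
  have hchar_mul (φ : A →ₐ[ℂ] ℂ) : φ (b i) * φ (b j) = ∑ m, N i j m * φ (b m) := by
    simp [← map_mul, hN]
  calc N i j k = ∑ m, N i j m * if m = k then 1 else 0 := by simp
    _ = ∑ m, N i j m * ∑ φ : A →ₐ[ℂ] ℂ,
          φ (b m) * starRingEnd ℂ (φ (b k)) / φ (∑ l, φ (b l) • st (b l)) := by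
      simp only [sum_character_mul_conj_div_codegree split lam hchar_st b horthonormal]
    _ = _ := by
      simp only [hchar_mul, Finset.mul_sum, Finset.sum_mul, Finset.sum_div]
      rw [Finset.sum_comm]
      exact Finset.sum_congr rfl fun _ _ => Finset.sum_congr rfl fun _ _ => by ring

/-- Verlinde-type formula in a finite-dimensional split commutative
semisimple Frobenius ∗-algebra over ℂ with orthonormal distinguished basis:
the structure constants are
`N_{ij}^k = ∑_φ φ(b i) φ(b j) conj(φ(b k)) / f_φ`,
where the sum is over all characters and `f_φ = φ(∑ l, φ(b l) • (b l)*)`. -/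
theorem stmt3 {A : Type*} [CommRing A] [Algebra ℂ A] [FiniteDimensional ℂ A]
    {ι : Type*} [Fintype ι] [DecidableEq ι] [Fintype (A →ₐ[ℂ] ℂ)]
    (split : A ≃ₐ[ℂ] (ι → ℂ))
    (lam : A →ₗ[ℂ] ℂ)
    (hnd : ∀ a : A, (∀ c : A, lam (a * c) = 0) → a = 0)
    (st : A → A)
    (hst_add : ∀ a c : A, st (a + c) = st a + st c)
    (hst_smul : ∀ (z : ℂ) (a : A), st (z • a) = (starRingEnd ℂ z) • st a)
    (hst_mul : ∀ a c : A, st (a * c) = st c * st a)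
    (hst_invol : ∀ a : A, st (st a) = a)
    (b : ι → A) (hb : Module.Basis ι ℂ A) (hbe : ∀ i, hb i = b i)
    (σ : ι ≃ ι) (hstb : ∀ i, st (b i) = b (σ i))
    (horthonormal : ∀ i j, lam (b i * st (b j)) = if i = j then 1 else 0)
    (hposdef : ∀ a : A, a ≠ 0 → ∃ r : ℝ, 0 < r ∧ lam (a * st a) = (r : ℂ))
    (hchar_st : ∀ (ψ : A →ₐ[ℂ] ℂ) (a : A), ψ (st a) = starRingEnd ℂ (ψ a))
    (hfne : ∀ φ : A →ₐ[ℂ] ℂ, φ (∑ l, φ (b l) • st (b l)) ≠ 0)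
    (N : ι → ι → ι → ℂ)
    (hN : ∀ i j, b i * b j = ∑ k, N i j k • b k) :
    ∀ i j k, N i j k =
      ∑ φ : A →ₐ[ℂ] ℂ, φ (b i) * φ (b j) * starRingEnd ℂ (φ (b k)) /
        φ (∑ l, φ (b l) • st (b l)) :=
  stmt3_general split lam st b horthonormal hchar_st N hN
end

section
/- Let S be an n × n complex matrix and d: {1,…,n} → ℂ \ {0} a function with d(1) ≠ 0, such that (1/√D) S is unitary for some positive real D, and such that the maps φ_j: b_i ↦ S_{ij}/d(j) (j = 1,…,n) are the characters of a commutative semisimple ℂ-algebra A with basis {b_i} and structure constants N_{ik}^m. If the formal codegree of φ_j equals D/|d(j)|², then the Verlinde formula holds: N_{ik}^m = (1/D) Σ_j S_{ij} S_{kj} conj(S_{mj}) / d(j). -/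
/-!
Evaluating `b i * b k = ∑ m, N i k m • b m` at the character `φ j` and multiplying by `d j`
shows that the row vector `j ↦ S i j * S k j / d j` is `N i k ᵥ* S`. Since `S * Sᴴ = D • 1`,
multiplying this on the right by `Sᴴ` recovers `D • N i k`.
-/

open scoped Matrix

theorem Matrix.vecMul_vecMul_of_mul_eq_smul_one {ι R : Type*} [Fintype ι] [DecidableEq ι]
    [CommSemiring R] {S T : Matrix ι ι R} {c : R} (hST : S * T = c • 1) (x : ι → R) :
    x ᵥ* S ᵥ* T = c • x := by
  rw [Matrix.vecMul_vecMul, hST, Matrix.vecMul_smul, Matrix.vecMul_one]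

theorem AlgHom.map_mul_eq_sum_smul {R A B ι : Type*} [CommSemiring R] [Semiring A]
    [Semiring B] [Algebra R A] [Algebra R B] [Fintype ι] (ψ : A →ₐ[R] B) {b : ι → A}
    {N : ι → ι → ι → R} (hN : ∀ i k, b i * b k = ∑ m, N i k m • b m) (i k : ι) :
    ψ (b i) * ψ (b k) = ∑ m, N i k m • ψ (b m) := by
  rw [← map_mul, hN, map_sum]
  simp only [map_smul]

theorem stmt6_general {n : ℕ} (S : Matrix (Fin n) (Fin n) ℂ) (d : Fin n → ℂ)
    (hd : ∀ j, d j ≠ 0) (D : ℝ) (hD : 0 < D)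
    (hS : S * (S.map (starRingEnd ℂ)).transpose = (D : ℂ) • 1)
    {A : Type*} [CommRing A] [Algebra ℂ A]
    (b : Fin n → A)
    (N : Fin n → Fin n → Fin n → ℂ)
    (hN : ∀ i k, b i * b k = ∑ m, N i k m • b m)
    (φ : Fin n → (A →ₐ[ℂ] ℂ))
    (hφS : ∀ i j, φ j (b i) = S i j / d j) :
    ∀ i k m, N i k m =
      (1 / (D : ℂ)) * ∑ j, S i j * S k j * starRingEnd ℂ (S m j) / d j := by
  intro i k m
  have hchar : (fun j => S i j * S k j / d j) = N i k ᵥ* S := by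
    funext j
    have h := (φ j).map_mul_eq_sum_smul hN i k
    simp only [hφS, smul_eq_mul] at h
    have hdj := hd j
    calc S i j * S k j / d j = S i j / d j * (S k j / d j) * d j := by field_simp
      _ = ∑ m', N i k m' * S m' j := by
        rw [h, Finset.sum_mul]
        exact Finset.sum_congr rfl fun m' _ => by field_simp
  have hinv := congrFun (Matrix.vecMul_vecMul_of_mul_eq_smul_one hS (N i k)) m
  rw [← hchar] at hinv
  simp only [Matrix.vecMul, dotProduct, Matrix.transpose_apply, Matrix.map_apply,
    Pi.smul_apply, smul_eq_mul] at hinv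
  have hD' : (D : ℂ) ≠ 0 := by exact_mod_cast hD.ne'
  rw [one_div, eq_inv_mul_iff_mul_eq₀ hD', ← hinv]
  exact Finset.sum_congr rfl fun j _ => by ring

/-- Abstract Verlinde formula from a unitary S-matrix. Let `S` be
an `n × n` complex matrix with `(1/√D)·S` unitary (`D > 0`), `d j ≠ 0`, such
that `φ j : b i ↦ S i j / d j` are the (pairwise distinct, exhaustive)
characters of a commutative semisimple ℂ-algebra `A` with basis `b` and
structure constants `N`, compatible with a basis involution
(`conj (φ j (b i)) = φ j (b (inv i))`). If the formal codegree of `φ j` is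
`D / |d j|²` (witnessed by elements `α j`), then
`N i k m = (1/D) ∑ j, S i j · S k j · conj (S m j) / d j`. -/
theorem stmt6 {n : ℕ} (S : Matrix (Fin n) (Fin n) ℂ) (d : Fin n → ℂ)
    (hd : ∀ j, d j ≠ 0) (D : ℝ) (hD : 0 < D)
    (hS : S * (S.map (starRingEnd ℂ)).transpose = (D : ℂ) • 1)
    {A : Type*} [CommRing A] [Algebra ℂ A]
    (b : Fin n → A) (hb : Module.Basis (Fin n) ℂ A) (hbe : ∀ i, hb i = b i)
    (N : Fin n → Fin n → Fin n → ℂ)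
    (hN : ∀ i k, b i * b k = ∑ m, N i k m • b m)
    (φ : Fin n → (A →ₐ[ℂ] ℂ)) (hφinj : Function.Injective φ)
    (hφall : ∀ ψ : A →ₐ[ℂ] ℂ, ∃ j, φ j = ψ)
    (hφS : ∀ i j, φ j (b i) = S i j / d j)
    (inv : Fin n ≃ Fin n)
    (hstar : ∀ i j, starRingEnd ℂ (φ j (b i)) = φ j (b (inv i)))
    (α : Fin n → A)
    (hcodeg : ∀ j k, φ k (α j) =
      if j = k then (D : ℂ) / (Complex.normSq (d j) : ℂ) else 0) :
    ∀ i k m, N i k m =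
      (1 / (D : ℂ)) * ∑ j, S i j * S k j * starRingEnd ℂ (S m j) / d j :=
  stmt6_general S d hd D hD hS b N hN φ hφS
end

section
/- Let A be an n-dimensional split commutative semisimple ℂ-algebra with basis {b_i} such that there is an n × n matrix S with S·conj(S)^T = D·Id (D > 0 real) and nonzero real numbers d_1,…,d_n with φ_j(b_i) = S_{j,i}/d_j defining the n characters φ_j of A. Then the structure constants N_{ik}^m of A in the basis {b_i} are given by N_{ik}^m = (1/D) Σ_j S_{j,i} S_{j,k} conj(S_{j,m}) / d_j. -/
open scoped BigOperators

/-- Classical Verlinde formula in abstract form. If the `n`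
characters of the `n`-dimensional split commutative semisimple ℂ-algebra `A`
are `ψ j (b i) = S j i / d j` for a matrix `S` with `S ⬝ conj(S)ᵀ = D·Id`
(`D > 0`), all `d j` nonzero and real, then the structure constants satisfy
`N i k m = (1/D) ∑ j, S j i · S j k · conj(S j m) / d j`. -/
theorem stmt16 {n : ℕ} {A : Type*} [CommRing A] [Algebra ℂ A]
    (b : Fin n → A) (hb : Module.Basis (Fin n) ℂ A) (hbe : ∀ i, hb i = b i)
    (S : Matrix (Fin n) (Fin n) ℂ) (D : ℝ) (hD : 0 < D)
    (hS : S * (S.map (starRingEnd ℂ)).transpose = (D : ℂ) • 1)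
    (d : Fin n → ℂ) (hd : ∀ j, d j ≠ 0)
    (hdreal : ∀ j, starRingEnd ℂ (d j) = d j)
    (ψ : Fin n → (A →ₐ[ℂ] ℂ)) (hψinj : Function.Injective ψ)
    (hψall : ∀ χ : A →ₐ[ℂ] ℂ, ∃ j, ψ j = χ)
    (hψS : ∀ j i, ψ j (b i) = S j i / d j)
    (hψconj : ∀ j i, starRingEnd ℂ (ψ j (b i)) =
      starRingEnd ℂ (S j i) / starRingEnd ℂ (d j))
    (N : Fin n → Fin n → Fin n → ℂ)
    (hN : ∀ i k, b i * b k = ∑ m, N i k m • b m) :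
    ∀ i k m, N i k m =
      (1 / (D : ℂ)) * ∑ j, S j i * S j k * starRingEnd ℂ (S j m) / d j := by
  intro i k m
  have hDne : (D : ℂ) ≠ 0 := by
    exact_mod_cast hD.ne'
  set T := (S.map (starRingEnd ℂ)).transpose with hT
  have hTS : T * S = (D : ℂ) • 1 := by
    have h1 : S * ((D : ℂ)⁻¹ • T) = 1 := by
      rw [Matrix.mul_smul, hS, smul_smul, inv_mul_cancel₀ hDne, one_smul]
    have h2 := mul_eq_one_comm.mp h1
    calc T * S = (D : ℂ) • (((D : ℂ)⁻¹ • T) * S) := by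
          rw [Matrix.smul_mul, smul_smul, mul_inv_cancel₀ hDne, one_smul]
      _ = (D : ℂ) • 1 := by rw [h2]
  have hentry : ∀ m' : Fin n, (∑ j, starRingEnd ℂ (S j m) * S j m') =
      if m = m' then (D : ℂ) else 0 := by
    intro m'
    have := congrFun (congrFun hTS m) m'
    simpa [Matrix.mul_apply, Matrix.one_apply, Matrix.smul_apply, hT,
      Matrix.transpose_apply, Matrix.map_apply, mul_comm] using this
  have key : ∀ j, (∑ m', N i k m' * S j m') = S j i * S j k / d j := by
    intro j
    have h := congrArg (ψ j) (hN i k)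
    rw [map_mul, map_sum] at h
    simp only [map_smul, smul_eq_mul, hψS] at h
    have h' : (∑ m', N i k m' * S j m') =
        (∑ m', N i k m' * (S j m' / d j)) * d j := by
      rw [Finset.sum_mul]
      refine Finset.sum_congr rfl fun m' _ => ?_
      rw [← mul_div_assoc, div_mul_cancel₀ _ (hd j)]
    rw [h', ← h]
    have hdj := hd j
    field_simp
  have main : (D : ℂ) * N i k m =
      ∑ j, starRingEnd ℂ (S j m) * (S j i * S j k / d j) := by
    calc (D : ℂ) * N i k m
        = ∑ m', N i k m' * (if m = m' then (D : ℂ) else 0) := by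
          simp [mul_comm]
      _ = ∑ m', N i k m' * (∑ j, starRingEnd ℂ (S j m) * S j m') := by
          simp only [hentry]
      _ = ∑ j, starRingEnd ℂ (S j m) * (∑ m', N i k m' * S j m') := by
          simp_rw [Finset.mul_sum]
          rw [Finset.sum_comm]
          refine Finset.sum_congr rfl fun j _ => Finset.sum_congr rfl fun m' _ => ?_
          ring
      _ = ∑ j, starRingEnd ℂ (S j m) * (S j i * S j k / d j) := by
          simp only [key]
  have hsum : (∑ j, S j i * S j k * starRingEnd ℂ (S j m) / d j)
      = ∑ j, starRingEnd ℂ (S j m) * (S j i * S j k / d j) := by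
    refine Finset.sum_congr rfl fun j _ => ?_
    ring
  rw [hsum, ← main, ← mul_assoc, one_div, inv_mul_cancel₀ hDne, one_mul]
end
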